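/- arXiv:2406.07991 — 4 statements merged into one kernel-verified Lean document; each statement's English description precedes it below -/
import Mathlib

section
/- (Asymptotic variance of a linear regression on aggregated targets, Theorem 1.) Let φ : Fin d → Ω_X → ℝ be square-integrable mean-zero test features with invertible covariance matrix Σ, and let ŵ : Fin d → Ω_T → ℝ be square-integrable random regression coefficients (over the training randomness, independent of the test point) whose covariances satisfy cov(ŵ k, ŵ j) = (s/(n−1)) * (Σ⁻¹) k j for all k, j, where s ≥ 0 and n ≥ 2. Then the model variance equals ∫_{Ω_T} ∫_{Ω_X} ( ∑_{k} (ŵ k ω_T − E[ŵ k]) * φ k ω_X )² dμ_X(ω_X) dμ_T(ω_T) = s * d / (n − 1). -/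
open MeasureTheory ProbabilityTheory Matrix

/-- Covariance of two real random variables. -/
noncomputable def cov {Ω : Type*} [MeasurableSpace Ω] (μ : Measure Ω) (X Y : Ω → ℝ) : ℝ :=
  ∫ ω, (X ω - ∫ x, X x ∂μ) * (Y ω - ∫ x, Y x ∂μ) ∂μ

/-!
Averaging over the test point first, the mean-zero features turn the squared prediction error
into the quadratic form `(ŵ - E ŵ)ᵀ Σ (ŵ - E ŵ)`; averaging over the training randomness then
gives `∑ₖⱼ cov(ŵₖ, ŵⱼ) Σₖⱼ = s / (n - 1) · tr(Σ⁻¹ Σ) = s d / (n - 1)`, using that `Σ` is symmetric.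
-/

section Moments

variable {Ω ι : Type*} [MeasurableSpace Ω] {μ : Measure Ω} [Fintype ι]

lemma cov_comm (X Y : Ω → ℝ) : cov μ X Y = cov μ Y X := by
  simp only [cov, mul_comm]

lemma cov_eq_integral_mul {X Y : Ω → ℝ} (hX : ∫ ω, X ω ∂μ = 0) (hY : ∫ ω, Y ω ∂μ = 0) :
    cov μ X Y = ∫ ω, X ω * Y ω ∂μ := by
  simp only [cov, hX, hY, sub_zero]

lemma integral_sq_sum_mul (a : ι → ℝ) {X : ι → Ω → ℝ} (hX : ∀ k, MemLp (X k) 2 μ) :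
    ∫ ω, (∑ k, a k * X k ω) ^ 2 ∂μ = ∑ k, ∑ j, a k * a j * ∫ ω, X k ω * X j ω ∂μ := by
  have hXX : ∀ k j, Integrable (fun ω => a k * a j * (X k ω * X j ω)) μ :=
    fun k j => ((hX k).integrable_mul (hX j)).const_mul _
  have hexpand : ∀ ω, (∑ k, a k * X k ω) ^ 2 = ∑ k, ∑ j, a k * a j * (X k ω * X j ω) := by
    intro ω
    rw [sq, Fintype.sum_mul_sum]
    exact Fintype.sum_congr _ _ fun k => Fintype.sum_congr _ _ fun j => by ring
  simp_rw [hexpand]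
  rw [integral_finsetSum _ fun k _ => integrable_finsetSum _ fun j _ => hXX k j]
  refine Fintype.sum_congr _ _ fun k => ?_
  rw [integral_finsetSum _ fun j _ => hXX k j]
  simp_rw [integral_const_mul]

lemma integral_sum_sum_centered_mul [IsFiniteMeasure μ] {Y : ι → Ω → ℝ}
    (hY : ∀ k, MemLp (Y k) 2 μ) (A : Matrix ι ι ℝ) :
    ∫ ω, ∑ k, ∑ j, (Y k ω - ∫ x, Y k x ∂μ) * (Y j ω - ∫ x, Y j x ∂μ) * A k j ∂μ
      = ∑ k, ∑ j, cov μ (Y k) (Y j) * A k j := by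
  have hcentered : ∀ k, MemLp (fun ω => Y k ω - ∫ x, Y k x ∂μ) 2 μ :=
    fun k => (hY k).sub (memLp_const _)
  have hYY : ∀ k j, Integrable
      (fun ω => (Y k ω - ∫ x, Y k x ∂μ) * (Y j ω - ∫ x, Y j x ∂μ) * A k j) μ :=
    fun k j => ((hcentered k).integrable_mul (hcentered j)).mul_const _
  rw [integral_finsetSum _ fun k _ => integrable_finsetSum _ fun j _ => hYY k j]
  refine Fintype.sum_congr _ _ fun k => ?_
  rw [integral_finsetSum _ fun j _ => hYY k j]
  simp_rw [integral_mul_const, cov]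

end Moments

lemma Matrix.sum_sum_mul_eq_trace_mul_transpose {m n R : Type*} [Fintype m] [Fintype n]
    [NonUnitalNonAssocSemiring R] (A B : Matrix m n R) :
    ∑ k, ∑ j, A k j * B k j = trace (A * Bᵀ) := by
  simp only [trace, diag, mul_apply, transpose_apply]

lemma Matrix.IsSymm.sum_sum_inv_mul_self {ι R : Type*} [Fintype ι] [DecidableEq ι] [CommRing R]
    {S : Matrix ι ι R} (hS : S.IsSymm) (hdet : IsUnit S.det) :
    ∑ k, ∑ j, S⁻¹ k j * S k j = Fintype.card ι := by
  rw [sum_sum_mul_eq_trace_mul_transpose, hS.eq, nonsing_inv_mul S hdet, trace_one]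

theorem variance_linear_regression_aggregated_general {ΩT ΩX : Type*}
    [MeasurableSpace ΩT] [MeasurableSpace ΩX]
    (μT : Measure ΩT) (μX : Measure ΩX)
    [IsProbabilityMeasure μT]
    {d : ℕ} {n : ℕ} {s : ℝ}
    (φ : Fin d → ΩX → ℝ) (hφ : ∀ k, MemLp (φ k) 2 μX)
    (hφ0 : ∀ k, ∫ ω, φ k ω ∂μX = 0)
    (S : Matrix (Fin d) (Fin d) ℝ)
    (hS : ∀ k j, S k j = cov μX (φ k) (φ j))
    (hSinv : IsUnit S.det)
    (w : Fin d → ΩT → ℝ) (hw : ∀ k, MemLp (w k) 2 μT)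
    (hwcov : ∀ k j, cov μT (w k) (w j) = (s / ((n : ℝ) - 1)) * S⁻¹ k j) :
    ∫ ωT, ∫ ωX, (∑ k, (w k ωT - ∫ ω, w k ω ∂μT) * φ k ωX) ^ 2 ∂μX ∂μT
      = s * d / ((n : ℝ) - 1) := by
  have hS_symm : S.IsSymm := Matrix.IsSymm.ext fun k j => by rw [hS, hS, cov_comm]
  calc ∫ ωT, ∫ ωX, (∑ k, (w k ωT - ∫ ω, w k ω ∂μT) * φ k ωX) ^ 2 ∂μX ∂μT
      = ∫ ωT, ∑ k, ∑ j, (w k ωT - ∫ ω, w k ω ∂μT) * (w j ωT - ∫ ω, w j ω ∂μT) * S k j ∂μT := by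
        simp_rw [integral_sq_sum_mul _ hφ, hS, cov_eq_integral_mul (hφ0 _) (hφ0 _)]
    _ = ∑ k, ∑ j, cov μT (w k) (w j) * S k j := integral_sum_sum_centered_mul hw S
    _ = s / ((n : ℝ) - 1) * ∑ k, ∑ j, S⁻¹ k j * S k j := by
        simp_rw [hwcov, mul_assoc, Finset.mul_sum]
    _ = s * d / ((n : ℝ) - 1) := by
        rw [hS_symm.sum_sum_inv_mul_self hSinv, Fintype.card_fin]
        ring

/-- Theorem 1 (asymptotic variance of a linear regression on aggregated targets):
if the test features `φ` are square-integrable, mean zero, with invertible covariance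
matrix `S`, and the random coefficients `w` (over training randomness) satisfy
`cov (w k) (w j) = (s/(n-1)) * (S⁻¹) k j`, then the model variance equals
`s * d / (n - 1)`. -/
theorem variance_linear_regression_aggregated {ΩT ΩX : Type*}
    [MeasurableSpace ΩT] [MeasurableSpace ΩX]
    (μT : Measure ΩT) (μX : Measure ΩX)
    [IsProbabilityMeasure μT] [IsProbabilityMeasure μX]
    {d : ℕ} (hd : 0 < d) {n : ℕ} (hn : 2 ≤ n) {s : ℝ} (hs : 0 ≤ s)
    (φ : Fin d → ΩX → ℝ) (hφ : ∀ k, MemLp (φ k) 2 μX)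
    (hφ0 : ∀ k, ∫ ω, φ k ω ∂μX = 0)
    (S : Matrix (Fin d) (Fin d) ℝ)
    (hS : ∀ k j, S k j = cov μX (φ k) (φ j))
    (hSinv : IsUnit S.det)
    (w : Fin d → ΩT → ℝ) (hw : ∀ k, MemLp (w k) 2 μT)
    (hwcov : ∀ k j, cov μT (w k) (w j) = (s / ((n : ℝ) - 1)) * S⁻¹ k j) :
    ∫ ωT, ∫ ωX, (∑ k, (w k ωT - ∫ ω, w k ω ∂μT) * φ k ωX) ^ 2 ∂μX ∂μT
      = s * d / ((n : ℝ) - 1) :=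
  variance_linear_regression_aggregated_general μT μX φ hφ hφ0 S hS hSinv w hw hwcov
end

section
/- (Theorem 2: asymptotic bias of a linear regression trained on an aggregated target.) Let f : Ω → ℝ and ψ : Ω → ℝ be square-integrable mean-zero random variables with Var(ψ) > 0. Then the population least-squares predictor of ψ from φ, evaluated as a predictor of f, satisfies E[ ( ∑_k w(ψ) k * φ k − f )² ] = Var(f) − Var(ψ) * R²(ψ) + 2 * ( pcov(ψ, f − ψ | φ) − cov(ψ, f − ψ) ). -/
/-!
All variables are centred, so the mean squared error of a linear predictor `w ⬝ᵥ φ` of `f` is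
`Var(w ⬝ᵥ φ - f)`, which bilinearity of the covariance turns into
`wᵀ Σ w - 2 wᵀ c(f) + Var f`. For `w = Σ⁻¹ c(ψ)` the quadratic term is
`c(ψ)ᵀ Σ⁻¹ c(ψ) = Var(ψ) R²(ψ)` and, `Σ` being symmetric, the cross term is
`c(ψ)ᵀ Σ⁻¹ c(f)`; splitting `c(f) = c(ψ) + c(f - ψ)` rewrites it through the partial covariance.
-/

open MeasureTheory ProbabilityTheory Matrix

namespace Matrix

variable {ι R : Type*} [Fintype ι] [DecidableEq ι] [CommRing R] {S : Matrix ι ι R}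

theorem mulVec_nonsing_inv_mulVec (hS : IsUnit S.det) (c : ι → R) : S *ᵥ (S⁻¹ *ᵥ c) = c := by
  rw [mulVec_mulVec, mul_nonsing_inv S hS, one_mulVec]

theorem IsSymm.nonsing_inv_mulVec_dotProduct (hS : S.IsSymm) (c b : ι → R) :
    (S⁻¹ *ᵥ c) ⬝ᵥ b = c ⬝ᵥ (S⁻¹ *ᵥ b) := by
  rw [dotProduct_mulVec, ← mulVec_transpose, hS.inv.eq, dotProduct_comm]

end Matrix

namespace ProbabilityTheory

variable {Ω ι : Type*} [MeasurableSpace Ω] {μ : Measure Ω}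

noncomputable def covMatrix (μ : Measure Ω) (φ : ι → Ω → ℝ) : Matrix ι ι ℝ :=
  Matrix.of fun k j => cov[φ k, φ j; μ]

noncomputable def covVec (μ : Measure Ω) (φ : ι → Ω → ℝ) (g : Ω → ℝ) : ι → ℝ :=
  fun k => cov[φ k, g; μ]

theorem covMatrix_isSymm (μ : Measure Ω) (φ : ι → Ω → ℝ) : (covMatrix μ φ).IsSymm := by
  ext k j
  simp only [covMatrix, transpose_apply, of_apply, covariance_comm]

theorem covVec_fun_sub [IsFiniteMeasure μ] {φ : ι → Ω → ℝ} {f g : Ω → ℝ}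
    (hφ : ∀ k, MemLp (φ k) 2 μ) (hf : MemLp f 2 μ) (hg : MemLp g 2 μ) :
    covVec μ φ (fun ω => f ω - g ω) = covVec μ φ f - covVec μ φ g :=
  funext fun k => covariance_fun_sub_right (hφ k) hf hg

variable [Fintype ι] {φ : ι → Ω → ℝ}

theorem memLp_fun_sum_mul (hφ : ∀ k, MemLp (φ k) 2 μ) (w : ι → ℝ) :
    MemLp (fun ω => ∑ k, w k * φ k ω) 2 μ :=
  memLp_finsetSum _ fun k _ => (hφ k).const_mul (w k)

variable [IsFiniteMeasure μ]

theorem covariance_fun_sum_mul_left (hφ : ∀ k, MemLp (φ k) 2 μ) {Y : Ω → ℝ} (hY : MemLp Y 2 μ)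
    (w : ι → ℝ) : cov[fun ω => ∑ k, w k * φ k ω, Y; μ] = w ⬝ᵥ covVec μ φ Y := by
  rw [covariance_fun_sum_left (X := fun k ω => w k * φ k ω) (fun k => (hφ k).const_mul (w k)) hY]
  simp only [covariance_const_mul_left, dotProduct, covVec]

theorem variance_fun_sum_mul (hφ : ∀ k, MemLp (φ k) 2 μ) (w : ι → ℝ) :
    Var[fun ω => ∑ k, w k * φ k ω; μ] = w ⬝ᵥ (covMatrix μ φ *ᵥ w) := by
  have hL := memLp_fun_sum_mul hφ w
  rw [← covariance_self hL.aemeasurable, covariance_fun_sum_mul_left hφ hL]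
  congr 1
  ext k
  rw [covVec, covariance_comm, covariance_fun_sum_mul_left hφ (hφ k)]
  simp only [dotProduct, mulVec, covMatrix, covVec, of_apply, covariance_comm, mul_comm]

theorem integral_sq_fun_sum_mul_sub (hφ : ∀ k, MemLp (φ k) 2 μ) (hφ0 : ∀ k, μ[φ k] = 0)
    {f : Ω → ℝ} (hf : MemLp f 2 μ) (hf0 : μ[f] = 0) (w : ι → ℝ) :
    ∫ ω, (∑ k, w k * φ k ω - f ω) ^ 2 ∂μ
      = w ⬝ᵥ (covMatrix μ φ *ᵥ w) - 2 * (w ⬝ᵥ covVec μ φ f) + Var[f; μ] := by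
  have hL := memLp_fun_sum_mul hφ w
  have hmean : μ[fun ω => ∑ k, w k * φ k ω - f ω] = 0 := by
    rw [integral_sub (hL.integrable one_le_two) (hf.integrable one_le_two),
      integral_finsetSum _ fun k _ => ((hφ k).const_mul (w k)).integrable one_le_two]
    simp only [integral_const_mul, hφ0, hf0, mul_zero, Finset.sum_const_zero, sub_zero]
  rw [← variance_of_integral_eq_zero (X := fun ω => ∑ k, w k * φ k ω - f ω)
      (hL.sub hf).aemeasurable hmean, variance_fun_sub hL hf,
    variance_fun_sum_mul hφ, covariance_fun_sum_mul_left hφ hf]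

end ProbabilityTheory

theorem bias_aggregated_target_general {Ω : Type*} [MeasurableSpace Ω] (μ : Measure Ω)
    [IsProbabilityMeasure μ] {d : ℕ}
    (φ : Fin d → Ω → ℝ) (hφ : ∀ k, MemLp (φ k) 2 μ)
    (hφ0 : ∀ k, ∫ ω, φ k ω ∂μ = 0)
    (S : Matrix (Fin d) (Fin d) ℝ)
    (hS : ∀ k j, S k j = cov μ (φ k) (φ j))
    (hSinv : IsUnit S.det)
    (f : Ω → ℝ) (hf : MemLp f 2 μ) (hf0 : ∫ ω, f ω ∂μ = 0)
    (ψ : Ω → ℝ) (hψ : MemLp ψ 2 μ)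
    (hψvar : 0 < variance ψ μ)
    (cψ : Fin d → ℝ) (hcψ : ∀ k, cψ k = cov μ (φ k) ψ)
    (wψ : Fin d → ℝ) (hwψ : wψ = S⁻¹ *ᵥ cψ)
    (R2ψ : ℝ) (hR2ψ : R2ψ = (cψ ⬝ᵥ (S⁻¹ *ᵥ cψ)) / variance ψ μ)
    (cgap : Fin d → ℝ) (hcgap : ∀ k, cgap k = cov μ (φ k) (fun ω => f ω - ψ ω))
    (pcovgap : ℝ)
    (hpcovgap : pcovgap
      = cov μ ψ (fun ω => f ω - ψ ω) - cψ ⬝ᵥ (S⁻¹ *ᵥ cgap)) :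
    ∫ ω, (∑ k, wψ k * φ k ω - f ω) ^ 2 ∂μ
      = variance f μ - variance ψ μ * R2ψ
        + 2 * (pcovgap - cov μ ψ (fun ω => f ω - ψ ω)) := by
  obtain rfl : S = covMatrix μ φ := Matrix.ext hS
  obtain rfl : cψ = covVec μ φ ψ := funext hcψ
  obtain rfl : cgap = covVec μ φ f - covVec μ φ ψ :=
    (funext hcgap).trans (covVec_fun_sub hφ hf hψ)
  have hsymm := covMatrix_isSymm μ φ
  rw [integral_sq_fun_sum_mul_sub hφ hφ0 hf hf0, hwψ, mulVec_nonsing_inv_mulVec hSinv,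
    hsymm.nonsing_inv_mulVec_dotProduct, hsymm.nonsing_inv_mulVec_dotProduct, hR2ψ, hpcovgap,
    mulVec_sub, dotProduct_sub, mul_div_cancel₀ _ hψvar.ne']
  ring

/-- Theorem 2 (asymptotic bias of a linear regression trained on an aggregated target):
the population least-squares predictor of the aggregated target `ψ` from the features `φ`,
evaluated as a predictor of the individual task `f`, has mean squared error
`Var(f) - Var(ψ) R²(ψ) + 2 (pcov(ψ, f - ψ | φ) - cov(ψ, f - ψ))`. -/
theorem bias_aggregated_target {Ω : Type*} [MeasurableSpace Ω] (μ : Measure Ω)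
    [IsProbabilityMeasure μ] {d : ℕ} (hd : 0 < d)
    (φ : Fin d → Ω → ℝ) (hφ : ∀ k, MemLp (φ k) 2 μ)
    (hφ0 : ∀ k, ∫ ω, φ k ω ∂μ = 0)
    (S : Matrix (Fin d) (Fin d) ℝ)
    (hS : ∀ k j, S k j = cov μ (φ k) (φ j))
    (hSinv : IsUnit S.det)
    (f : Ω → ℝ) (hf : MemLp f 2 μ) (hf0 : ∫ ω, f ω ∂μ = 0)
    (ψ : Ω → ℝ) (hψ : MemLp ψ 2 μ) (hψ0 : ∫ ω, ψ ω ∂μ = 0)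
    (hψvar : 0 < variance ψ μ)
    (cψ : Fin d → ℝ) (hcψ : ∀ k, cψ k = cov μ (φ k) ψ)
    (wψ : Fin d → ℝ) (hwψ : wψ = S⁻¹ *ᵥ cψ)
    (R2ψ : ℝ) (hR2ψ : R2ψ = (cψ ⬝ᵥ (S⁻¹ *ᵥ cψ)) / variance ψ μ)
    (cgap : Fin d → ℝ) (hcgap : ∀ k, cgap k = cov μ (φ k) (fun ω => f ω - ψ ω))
    (pcovgap : ℝ)
    (hpcovgap : pcovgap
      = cov μ ψ (fun ω => f ω - ψ ω) - cψ ⬝ᵥ (S⁻¹ *ᵥ cgap)) :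
    ∫ ω, (∑ k, wψ k * φ k ω - f ω) ^ 2 ∂μ
      = variance f μ - variance ψ μ * R2ψ
        + 2 * (pcovgap - cov μ ψ (fun ω => f ω - ψ ω)) :=
  bias_aggregated_target_general μ φ hφ hφ0 S hS hSinv f hf hf0 ψ hψ hψvar cψ hcψ wψ hwψ R2ψ hR2ψ
    cgap hcgap pcovgap hpcovgap
end

section
/- (Theorem 2, alternative form.) Let f : Ω → ℝ and ψ : Ω → ℝ be square-integrable mean-zero random variables with Var(ψ) > 0. Then E[ ( ∑_k w(ψ) k * φ k − f )² ] = Var(f) + Var(ψ) * R²(ψ) − 2 * ( cov(f, ψ) − pcov(f, ψ | φ) ). -/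
/-! The predictor error `∑ k, wψ k * φ k - f` is centred, so its second moment is its variance.
Bilinearity of covariance expands that variance as `wψ ⬝ᵥ Σ wψ - 2 wψ ⬝ᵥ c(f) + Var f`, and for
`wψ = Σ⁻¹ c(ψ)` the quadratic term collapses to `c(ψ) ⬝ᵥ Σ⁻¹ c(ψ) = Var ψ · R²(ψ)` while the cross
term is `c(f) ⬝ᵥ Σ⁻¹ c(ψ) = cov(f, ψ) - pcov(f, ψ | φ)`. -/

open MeasureTheory ProbabilityTheory Matrix

lemma cov_eq_covariance {Ω : Type*} [MeasurableSpace Ω] (μ : Measure Ω) (X Y : Ω → ℝ) :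
    cov μ X Y = cov[X, Y; μ] :=
  rfl

section LinearCombination

variable {Ω ι : Type*} [MeasurableSpace Ω] {μ : Measure Ω} [Fintype ι]
  {X : ι → Ω → ℝ} {Y : Ω → ℝ}

lemma memLp_sum_mul_sub {p : ENNReal} (hX : ∀ i, MemLp (X i) p μ) (hY : MemLp Y p μ)
    (w : ι → ℝ) : MemLp (fun ω ↦ ∑ i, w i * X i ω - Y ω) p μ :=
  (memLp_finsetSum _ fun i _ ↦ (hX i).const_mul (w i)).sub hY

lemma integral_sum_mul_sub_eq_zero (hX : ∀ i, Integrable (X i) μ) (hY : Integrable Y μ)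
    (hX0 : ∀ i, ∫ ω, X i ω ∂μ = 0) (hY0 : ∫ ω, Y ω ∂μ = 0) (w : ι → ℝ) :
    ∫ ω, (∑ i, w i * X i ω - Y ω) ∂μ = 0 := by
  rw [integral_sub (integrable_finsetSum _ fun i _ ↦ (hX i).const_mul (w i)) hY,
    integral_finsetSum _ fun i _ ↦ (hX i).const_mul (w i)]
  simp [integral_const_mul, hX0, hY0]

lemma variance_sum_mul_sub [IsFiniteMeasure μ] (hX : ∀ i, MemLp (X i) 2 μ) (hY : MemLp Y 2 μ)
    (w : ι → ℝ) :
    Var[fun ω ↦ ∑ i, w i * X i ω - Y ω; μ]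
      = w ⬝ᵥ (Matrix.of (fun i j ↦ cov[X i, X j; μ]) *ᵥ w)
        - 2 * (w ⬝ᵥ fun i ↦ cov[X i, Y; μ]) + Var[Y; μ] := by
  have hwX : ∀ i, MemLp (fun ω ↦ w i * X i ω) 2 μ := fun i ↦ (hX i).const_mul (w i)
  have hsum : MemLp (fun ω ↦ ∑ i, w i * X i ω) 2 μ := memLp_finsetSum _ fun i _ ↦ hwX i
  rw [← covariance_self (memLp_sum_mul_sub hX hY w).aemeasurable,
    covariance_fun_sub_fun_sub hsum hY hsum hY, covariance_fun_sum_fun_sum hwX hwX,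
    covariance_fun_sum_left hwX hY, covariance_fun_sum_right hwX hY,
    covariance_self hY.aemeasurable]
  simp only [covariance_const_mul_left, covariance_const_mul_right, covariance_comm Y]
  rw [two_mul, ← sub_sub]
  congr 3
  simp only [dotProduct, mulVec, of_apply, Finset.mul_sum]
  exact Finset.sum_congr rfl fun i _ ↦ Finset.sum_congr rfl fun j _ ↦ by ring

end LinearCombination

lemma dotProduct_mulVec_nonsing_inv_mulVec {ι R : Type*} [Fintype ι] [DecidableEq ι] [CommRing R]
    {S : Matrix ι ι R} (hS : IsUnit S.det) (c : ι → R) :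
    (S⁻¹ *ᵥ c) ⬝ᵥ (S *ᵥ (S⁻¹ *ᵥ c)) = c ⬝ᵥ (S⁻¹ *ᵥ c) := by
  rw [mulVec_mulVec, mul_nonsing_inv S hS, one_mulVec, dotProduct_comm]

theorem bias_aggregated_target_alt_general {Ω : Type*} [MeasurableSpace Ω] (μ : Measure Ω)
    [IsProbabilityMeasure μ] {d : ℕ}
    (φ : Fin d → Ω → ℝ) (hφ : ∀ k, MemLp (φ k) 2 μ)
    (hφ0 : ∀ k, ∫ ω, φ k ω ∂μ = 0)
    (S : Matrix (Fin d) (Fin d) ℝ)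
    (hS : ∀ k j, S k j = cov μ (φ k) (φ j))
    (hSinv : IsUnit S.det)
    (f : Ω → ℝ) (hf : MemLp f 2 μ) (hf0 : ∫ ω, f ω ∂μ = 0)
    (ψ : Ω → ℝ)
    (hψvar : 0 < variance ψ μ)
    (cf : Fin d → ℝ) (hcf : ∀ k, cf k = cov μ (φ k) f)
    (cψ : Fin d → ℝ)
    (wψ : Fin d → ℝ) (hwψ : wψ = S⁻¹ *ᵥ cψ)
    (R2ψ : ℝ) (hR2ψ : R2ψ = (cψ ⬝ᵥ (S⁻¹ *ᵥ cψ)) / variance ψ μ)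
    (pcovfψ : ℝ) (hpcovfψ : pcovfψ = cov μ f ψ - cf ⬝ᵥ (S⁻¹ *ᵥ cψ)) :
    ∫ ω, (∑ k, wψ k * φ k ω - f ω) ^ 2 ∂μ
      = variance f μ + variance ψ μ * R2ψ - 2 * (cov μ f ψ - pcovfψ) := by
  simp only [cov_eq_covariance] at hS hcf
  have hS' : S = Matrix.of fun k j ↦ cov[φ k, φ j; μ] := Matrix.ext hS
  have hcf' : cf = fun k ↦ cov[φ k, f; μ] := funext hcf
  have hcentered := integral_sum_mul_sub_eq_zero (fun k ↦ (hφ k).integrable one_le_two)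
    (hf.integrable one_le_two) hφ0 hf0 wψ
  rw [← variance_of_integral_eq_zero (memLp_sum_mul_sub hφ hf wψ).aemeasurable hcentered,
    variance_sum_mul_sub hφ hf, ← hS', ← hcf', hwψ, dotProduct_mulVec_nonsing_inv_mulVec hSinv,
    dotProduct_comm _ cf, hR2ψ, hpcovfψ, mul_div_cancel₀ _ hψvar.ne']
  ring

/-- Theorem 2, alternative form: the population least-squares predictor of the aggregated
target `ψ`, evaluated as a predictor of `f`, has mean squared error
`Var(f) + Var(ψ) R²(ψ) - 2 (cov(f, ψ) - pcov(f, ψ | φ))`. -/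
theorem bias_aggregated_target_alt {Ω : Type*} [MeasurableSpace Ω] (μ : Measure Ω)
    [IsProbabilityMeasure μ] {d : ℕ} (hd : 0 < d)
    (φ : Fin d → Ω → ℝ) (hφ : ∀ k, MemLp (φ k) 2 μ)
    (hφ0 : ∀ k, ∫ ω, φ k ω ∂μ = 0)
    (S : Matrix (Fin d) (Fin d) ℝ)
    (hS : ∀ k j, S k j = cov μ (φ k) (φ j))
    (hSinv : IsUnit S.det)
    (f : Ω → ℝ) (hf : MemLp f 2 μ) (hf0 : ∫ ω, f ω ∂μ = 0)
    (ψ : Ω → ℝ) (hψ : MemLp ψ 2 μ) (hψ0 : ∫ ω, ψ ω ∂μ = 0)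
    (hψvar : 0 < variance ψ μ)
    (cf : Fin d → ℝ) (hcf : ∀ k, cf k = cov μ (φ k) f)
    (cψ : Fin d → ℝ) (hcψ : ∀ k, cψ k = cov μ (φ k) ψ)
    (wψ : Fin d → ℝ) (hwψ : wψ = S⁻¹ *ᵥ cψ)
    (R2ψ : ℝ) (hR2ψ : R2ψ = (cψ ⬝ᵥ (S⁻¹ *ᵥ cψ)) / variance ψ μ)
    (pcovfψ : ℝ) (hpcovfψ : pcovfψ = cov μ f ψ - cf ⬝ᵥ (S⁻¹ *ᵥ cψ)) :
    ∫ ω, (∑ k, wψ k * φ k ω - f ω) ^ 2 ∂μ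
      = variance f μ + variance ψ μ * R2ψ - 2 * (cov μ f ψ - pcovfψ) :=
  bias_aggregated_target_alt_general μ φ hφ hφ0 S hS hSinv f hf hf0 ψ hψvar cf hcf cψ wψ hwψ R2ψ
    hR2ψ pcovfψ hpcovfψ
end

section
/- (Corollary, Equation 8: profitability condition for feature aggregation.) Let x : Fin D → Ω → ℝ and φ : Fin d → Ω → ℝ be two families of square-integrable mean-zero random variables (original and aggregated features) with invertible covariance matrices Σ_x and Σ_φ respectively, let f : Ω → ℝ be square-integrable and mean-zero with Var(f) > 0, let s ≥ 0 be the noise variance and n ≥ 2 the number of samples. Define the asymptotic mean squared errors MSE_D := (s/(n−1)) * D + E[ ( ∑_k (Σ_x⁻¹ *ᵥ c_x(f)) k * x k − f )² ] and MSE_d := (s/(n−1)) * d + E[ ( ∑_k (Σ_φ⁻¹ *ᵥ c_φ(f)) k * φ k − f )² ]. Then MSE_d ≤ MSE_D if and only if (s/(n−1)) * (D − d) ≥ Var(f) * (R²_D − R²_d), where R²_D := (c_x(f) ⬝ᵥ (Σ_x⁻¹ *ᵥ c_x(f)))/Var(f) and R²_d := (c_φ(f) ⬝ᵥ (Σ_φ⁻¹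 *ᵥ c_φ(f)))/Var(f). -/
/-!
For centred variables the mean squared error of a linear predictor `∑ k, w k * y k` of `f` is the
variance of the residual, which expands bilinearly to `wᵀ Σ w - 2 wᵀ c + Var f`. At the
least-squares weights `w = Σ⁻¹ c` the normal equations `Σ w = c` turn this into
`Var f - cᵀ Σ⁻¹ c = Var f * (1 - R²)`, so comparing the two asymptotic errors is comparing
`(s / (n - 1)) * (D - d)` with `Var f * (R²_D - R²_d)`.
-/

open MeasureTheory ProbabilityTheory Matrix

section LeastSquares

variable {Ω ι : Type*} [MeasurableSpace Ω] {μ : Measure Ω} [Fintype ι]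

noncomputable def covarianceMatrix (μ : Measure Ω) (y : ι → Ω → ℝ) : Matrix ι ι ℝ :=
  of fun k j ↦ cov[y k, y j; μ]

noncomputable def crossCovariance (μ : Measure Ω) (y : ι → Ω → ℝ) (f : Ω → ℝ) : ι → ℝ :=
  fun k ↦ cov[y k, f; μ]

lemma variance_weightedSum_sub [IsFiniteMeasure μ] {y : ι → Ω → ℝ} {f : Ω → ℝ}
    (hy : ∀ k, MemLp (y k) 2 μ) (hf : MemLp f 2 μ) (w : ι → ℝ) :
    Var[fun ω ↦ ∑ k, w k * y k ω - f ω; μ]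
      = w ⬝ᵥ (covarianceMatrix μ y *ᵥ w) - 2 * (w ⬝ᵥ crossCovariance μ y f) + Var[f; μ] := by
  have hwy : ∀ k, MemLp (fun ω ↦ w k * y k ω) 2 μ := fun k ↦ (hy k).const_mul (w k)
  have hsum : MemLp (fun ω ↦ ∑ k, w k * y k ω) 2 μ := memLp_finsetSum _ fun k _ ↦ hwy k
  have hquad : w ⬝ᵥ (covarianceMatrix μ y *ᵥ w) = ∑ k, ∑ j, w j * (w k * cov[y k, y j; μ]) := by
    simp only [dotProduct, mulVec, covarianceMatrix, of_apply, Finset.mul_sum]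
    exact Finset.sum_congr rfl fun k _ ↦ Finset.sum_congr rfl fun j _ ↦ by ring
  rw [← covariance_self (X := fun ω ↦ ∑ k, w k * y k ω - f ω) (hsum.sub hf).aemeasurable,
    covariance_fun_sub_fun_sub hsum hf hsum hf, covariance_fun_sum_fun_sum hwy hwy,
    covariance_comm f, covariance_fun_sum_left hwy hf, covariance_self hf.aemeasurable, hquad]
  simp only [covariance_const_mul_left, covariance_const_mul_right, crossCovariance, dotProduct]
  ring

lemma variance_leastSquaresResidual [IsFiniteMeasure μ] [DecidableEq ι]
    {y : ι → Ω → ℝ} {f : Ω → ℝ}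
    (hy : ∀ k, MemLp (y k) 2 μ) (hf : MemLp f 2 μ) (hS : IsUnit (covarianceMatrix μ y).det) :
    Var[fun ω ↦ ∑ k, ((covarianceMatrix μ y)⁻¹ *ᵥ crossCovariance μ y f) k * y k ω - f ω; μ]
      = Var[f; μ]
        - crossCovariance μ y f ⬝ᵥ ((covarianceMatrix μ y)⁻¹ *ᵥ crossCovariance μ y f) := by
  rw [variance_weightedSum_sub hy hf, mulVec_mulVec, mul_nonsing_inv _ hS, one_mulVec,
    dotProduct_comm]
  ring

lemma integral_weightedSum_sub_sq {y : ι → Ω → ℝ} {f : Ω → ℝ}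
    (hy : ∀ k, Integrable (y k) μ) (hy0 : ∀ k, ∫ ω, y k ω ∂μ = 0)
    (hf : Integrable f μ) (hf0 : ∫ ω, f ω ∂μ = 0) (w : ι → ℝ) :
    ∫ ω, (∑ k, w k * y k ω - f ω) ^ 2 ∂μ = Var[fun ω ↦ ∑ k, w k * y k ω - f ω; μ] := by
  have hwy : ∀ k, Integrable (fun ω ↦ w k * y k ω) μ := fun k ↦ (hy k).const_mul (w k)
  have hsum : Integrable (fun ω ↦ ∑ k, w k * y k ω) μ := integrable_finsetSum _ fun k _ ↦ hwy k
  refine (variance_of_integral_eq_zero (X := fun ω ↦ ∑ k, w k * y k ω - f ω)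
    (hsum.sub hf).aemeasurable ?_).symm
  rw [integral_sub hsum hf, integral_finsetSum _ fun k _ ↦ hwy k]
  simp [integral_const_mul, hy0, hf0]

end LeastSquares

theorem feature_aggregation_profitable_general {Ω : Type*} [MeasurableSpace Ω] (μ : Measure Ω)
    [IsProbabilityMeasure μ] {D d : ℕ}
    {n : ℕ} {s : ℝ}
    (x : Fin D → Ω → ℝ) (hx : ∀ k, MemLp (x k) 2 μ)
    (hx0 : ∀ k, ∫ ω, x k ω ∂μ = 0)
    (φ : Fin d → Ω → ℝ) (hφ : ∀ k, MemLp (φ k) 2 μ)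
    (hφ0 : ∀ k, ∫ ω, φ k ω ∂μ = 0)
    (Sx : Matrix (Fin D) (Fin D) ℝ) (hSx : ∀ k j, Sx k j = cov μ (x k) (x j))
    (hSxinv : IsUnit Sx.det)
    (Sφ : Matrix (Fin d) (Fin d) ℝ) (hSφ : ∀ k j, Sφ k j = cov μ (φ k) (φ j))
    (hSφinv : IsUnit Sφ.det)
    (f : Ω → ℝ) (hf : MemLp f 2 μ) (hf0 : ∫ ω, f ω ∂μ = 0)
    (hfvar : 0 < variance f μ)
    (cx : Fin D → ℝ) (hcx : ∀ k, cx k = cov μ (x k) f)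
    (cφ : Fin d → ℝ) (hcφ : ∀ k, cφ k = cov μ (φ k) f)
    (MSE_D MSE_d R2_D R2_d : ℝ)
    (hMSED : MSE_D = (s / ((n : ℝ) - 1)) * (D : ℝ)
      + ∫ ω, (∑ k, (Sx⁻¹ *ᵥ cx) k * x k ω - f ω) ^ 2 ∂μ)
    (hMSEd : MSE_d = (s / ((n : ℝ) - 1)) * (d : ℝ)
      + ∫ ω, (∑ k, (Sφ⁻¹ *ᵥ cφ) k * φ k ω - f ω) ^ 2 ∂μ)
    (hR2D : R2_D = (cx ⬝ᵥ (Sx⁻¹ *ᵥ cx)) / variance f μ)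
    (hR2d : R2_d = (cφ ⬝ᵥ (Sφ⁻¹ *ᵥ cφ)) / variance f μ) :
    MSE_d ≤ MSE_D ↔
      (s / ((n : ℝ) - 1)) * ((D : ℝ) - (d : ℝ)) ≥ variance f μ * (R2_D - R2_d) := by
  -- `cov μ X Y` unfolds to Mathlib's `cov[X, Y; μ]`.
  obtain rfl : Sx = covarianceMatrix μ x := Matrix.ext hSx
  obtain rfl : Sφ = covarianceMatrix μ φ := Matrix.ext hSφ
  obtain rfl : cx = crossCovariance μ x f := funext hcx
  obtain rfl : cφ = crossCovariance μ φ f := funext hcφ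
  rw [hMSED, hMSEd, hR2D, hR2d,
    integral_weightedSum_sub_sq (fun k ↦ (hx k).integrable one_le_two) hx0
      (hf.integrable one_le_two) hf0,
    integral_weightedSum_sub_sq (fun k ↦ (hφ k).integrable one_le_two) hφ0
      (hf.integrable one_le_two) hf0,
    variance_leastSquaresResidual hx hf hSxinv, variance_leastSquaresResidual hφ hf hSφinv,
    mul_sub (variance f μ), mul_div_cancel₀ _ hfvar.ne', mul_div_cancel₀ _ hfvar.ne']
  constructor <;> intro h <;> linarith

/-- Corollary (Equation 8): the aggregation of `D` features into `d < D` aggregated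
ones is profitable in terms of asymptotic MSE of a linear model if and only if
`(s/(n-1)) * (D - d) ≥ Var(f) * (R²_D - R²_d)`. -/
theorem feature_aggregation_profitable {Ω : Type*} [MeasurableSpace Ω] (μ : Measure Ω)
    [IsProbabilityMeasure μ] {D d : ℕ} (hD : 0 < D) (hd : 0 < d)
    {n : ℕ} (hn : 2 ≤ n) {s : ℝ} (hs : 0 ≤ s)
    (x : Fin D → Ω → ℝ) (hx : ∀ k, MemLp (x k) 2 μ)
    (hx0 : ∀ k, ∫ ω, x k ω ∂μ = 0)
    (φ : Fin d → Ω → ℝ) (hφ : ∀ k, MemLp (φ k) 2 μ)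
    (hφ0 : ∀ k, ∫ ω, φ k ω ∂μ = 0)
    (Sx : Matrix (Fin D) (Fin D) ℝ) (hSx : ∀ k j, Sx k j = cov μ (x k) (x j))
    (hSxinv : IsUnit Sx.det)
    (Sφ : Matrix (Fin d) (Fin d) ℝ) (hSφ : ∀ k j, Sφ k j = cov μ (φ k) (φ j))
    (hSφinv : IsUnit Sφ.det)
    (f : Ω → ℝ) (hf : MemLp f 2 μ) (hf0 : ∫ ω, f ω ∂μ = 0)
    (hfvar : 0 < variance f μ)
    (cx : Fin D → ℝ) (hcx : ∀ k, cx k = cov μ (x k) f)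
    (cφ : Fin d → ℝ) (hcφ : ∀ k, cφ k = cov μ (φ k) f)
    (MSE_D MSE_d R2_D R2_d : ℝ)
    (hMSED : MSE_D = (s / ((n : ℝ) - 1)) * (D : ℝ)
      + ∫ ω, (∑ k, (Sx⁻¹ *ᵥ cx) k * x k ω - f ω) ^ 2 ∂μ)
    (hMSEd : MSE_d = (s / ((n : ℝ) - 1)) * (d : ℝ)
      + ∫ ω, (∑ k, (Sφ⁻¹ *ᵥ cφ) k * φ k ω - f ω) ^ 2 ∂μ)
    (hR2D : R2_D = (cx ⬝ᵥ (Sx⁻¹ *ᵥ cx)) / variance f μ)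
    (hR2d : R2_d = (cφ ⬝ᵥ (Sφ⁻¹ *ᵥ cφ)) / variance f μ) :
    MSE_d ≤ MSE_D ↔
      (s / ((n : ℝ) - 1)) * ((D : ℝ) - (d : ℝ)) ≥ variance f μ * (R2_D - R2_d) :=
  feature_aggregation_profitable_general μ x hx hx0 φ hφ hφ0 Sx hSx hSxinv Sφ hSφ hSφinv f hf hf0
    hfvar cx hcx cφ hcφ MSE_D MSE_d R2_D R2_d hMSED hMSEd hR2D hR2d
end
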